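/- For the n-Kronecker quiver with n ≥ 3: if M is indecomposable with μ(M) = μ_m = {1,2,4,...,2m}, then every indecomposable regular factor module of M contains an indecomposable submodule of dimension vector (1,1). -/

import Mathlib

/-! Representations of the `n`-Kronecker quiver (two vertices, `n` arrows from
vertex 2 to vertex 1) over a field `k`, with the Gabriel-Roiter measure. -/

/-- Gabriel-Roiter order on subsets of ℕ. -/
def grLT (I J : Set ℕ) : Prop := I ≠ J ∧ sInf (symmDiff I J) ∈ J

def grLE (I J : Set ℕ) : Prop := I = J ∨ grLT I J

/-- `J` starts with `I`: `I = J`, or `I ⊊ J` and every element of `I` is smaller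
than every element of `J \ I`. -/
def startsWith (I J : Set ℕ) : Prop :=
  I = J ∨ (I ⊂ J ∧ ∀ a ∈ I, ∀ b ∈ J \ I, a < b)

/-- A representation of the `n`-Kronecker quiver: vector spaces `V1`, `V2` and `n`
linear maps `V2 → V1`. -/
structure KRep (k : Type) [Field k] (n : ℕ) : Type 1 where
  V1 : Type
  V2 : Type
  [ac1 : AddCommGroup V1]
  [ac2 : AddCommGroup V2]
  [md1 : Module k V1]
  [md2 : Module k V2]
  f : Fin n → V2 →ₗ[k] V1

attribute [instance] KRep.ac1 KRep.ac2 KRep.md1 KRep.md2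

variable {k : Type} [Field k] {n : ℕ}

/-- Morphisms of Kronecker representations. -/
@[ext] structure KHom (A B : KRep k n) where
  g1 : A.V1 →ₗ[k] B.V1
  g2 : A.V2 →ₗ[k] B.V2
  comm : ∀ i, (B.f i).comp g2 = g1.comp (A.f i)

def KHom.idHom (A : KRep k n) : KHom A A :=
  ⟨LinearMap.id, LinearMap.id, fun _ => rfl⟩

def KHom.comp {A B C : KRep k n} (g : KHom B C) (f : KHom A B) : KHom A C :=
  ⟨g.g1.comp f.g1, g.g2.comp f.g2, fun i => by
    ext x
    have h1 := LinearMap.congr_fun (g.comm i) (f.g2 x)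
    have h2 := LinearMap.congr_fun (f.comm i) x
    simp only [LinearMap.comp_apply] at h1 h2 ⊢
    rw [h1, h2]⟩

def KHom.Mono {A B : KRep k n} (φ : KHom A B) : Prop :=
  Function.Injective φ.g1 ∧ Function.Injective φ.g2

def KHom.Epi {A B : KRep k n} (φ : KHom A B) : Prop :=
  Function.Surjective φ.g1 ∧ Function.Surjective φ.g2

/-- A subrepresentation: subspaces stable under all the arrows. -/
structure KSub (A : KRep k n) where
  W1 : Submodule k A.V1
  W2 : Submodule k A.V2
  hmap : ∀ i, ∀ x ∈ W2, A.f i x ∈ W1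

/-- A subrepresentation as a representation in its own right. -/
def KSub.toRep {A : KRep k n} (U : KSub A) : KRep k n where
  V1 := U.W1
  V2 := U.W2
  f := fun i => (A.f i).restrict (U.hmap i)

/-- Strict inclusion of subrepresentations. -/
def KSub.sLT {A : KRep k n} (U W : KSub A) : Prop :=
  (U.W1 ≤ W.W1 ∧ U.W2 ≤ W.W2) ∧ (U.W1 ≠ W.W1 ∨ U.W2 ≠ W.W2)

/-- Indecomposability: nonzero, and any direct sum decomposition into two
subrepresentations is trivial. -/
def KIndec (A : KRep k n) : Prop :=
  (Nontrivial A.V1 ∨ Nontrivial A.V2) ∧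
  ∀ U W : KSub A, IsCompl U.W1 W.W1 → IsCompl U.W2 W.W2 →
    (U.W1 = ⊥ ∧ U.W2 = ⊥) ∨ (W.W1 = ⊥ ∧ W.W2 = ⊥)

/-- The dimension vector `(dim V1, dim V2)`. -/
noncomputable def dimVec (A : KRep k n) : ℕ × ℕ :=
  (Module.finrank k A.V1, Module.finrank k A.V2)

/-- The length of a representation (= total dimension). -/
noncomputable def repLen (A : KRep k n) : ℕ :=
  Module.finrank k A.V1 + Module.finrank k A.V2

def FinDimRep (A : KRep k n) : Prop :=
  FiniteDimensional k A.V1 ∧ FiniteDimensional k A.V2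

/-- The sets of lengths arising from strict chains of indecomposable
subrepresentations of `A`. -/
def grChains (A : KRep k n) : Set (Set ℕ) :=
  {S | ∃ (t : ℕ) (c : Fin (t + 1) → KSub A),
    (∀ i j : Fin (t + 1), i < j → (c i).sLT (c j)) ∧
    (∀ i, KIndec (c i).toRep) ∧
    S = Set.range fun i => repLen (c i).toRep}

/-- `μ` is the Gabriel-Roiter measure of `A`. -/
def IsGR (A : KRep k n) (μ : Set ℕ) : Prop :=
  μ ∈ grChains A ∧ ∀ S ∈ grChains A, grLE S μ

/-- Projective representations, via the lifting property. -/
def IsProjRep (P : KRep k n) : Prop :=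
  ∀ (A B : KRep k n) (g : KHom A B) (h : KHom P B), g.Epi → ∃ l : KHom P A, g.comp l = h

/-- Injective representations, via the extension property. -/
def IsInjRep (I : KRep k n) : Prop :=
  ∀ (A B : KRep k n) (g : KHom A B) (h : KHom A I), g.Mono → ∃ l : KHom B I, l.comp g = h

/-- `Z` is the Auslander-Reiten translate `τ X`: there is an almost split
(Auslander-Reiten) short exact sequence `0 → Z → E → X → 0`. -/
def IsARTranslate (X Z : KRep k n) : Prop :=
  ∃ (E : KRep k n) (ι : KHom Z E) (π : KHom E X),
    ι.Mono ∧ π.Epi ∧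
    LinearMap.range ι.g1 = LinearMap.ker π.g1 ∧
    LinearMap.range ι.g2 = LinearMap.ker π.g2 ∧
    KIndec Z ∧ KIndec X ∧
    (¬ ∃ s : KHom X E, π.comp s = KHom.idHom X) ∧
    (∀ (W : KRep k n) (h : KHom W X), (¬ ∃ s : KHom X W, h.comp s = KHom.idHom X) →
      ∃ l : KHom W E, π.comp l = h)

/-- Preprojective: some iterated AR translate is projective. -/
def Preprojective (M : KRep k n) : Prop :=
  ∃ (r : ℕ) (T : Fin (r + 1) → KRep k n), T 0 = M ∧
    (∀ i : Fin r, IsARTranslate (T i.castSucc) (T i.succ)) ∧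
    IsProjRep (T (Fin.last r))

/-- Preinjective: some iterated inverse AR translate is injective. -/
def Preinjective (M : KRep k n) : Prop :=
  ∃ (r : ℕ) (T : Fin (r + 1) → KRep k n), T 0 = M ∧
    (∀ i : Fin r, IsARTranslate (T i.succ) (T i.castSucc)) ∧
    IsInjRep (T (Fin.last r))

/-- Regular: indecomposable, neither preprojective nor preinjective. -/
def RegularRep (M : KRep k n) : Prop :=
  KIndec M ∧ ¬ Preprojective M ∧ ¬ Preinjective M

/-- The Gabriel-Roiter measure `μ_m = {1, 2, 4, 6, ..., 2m}`. -/
def muLow (m : ℕ) : Set ℕ := insert 1 {x | ∃ j, 1 ≤ j ∧ j ≤ m ∧ x = 2 * j}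

/-- The Gabriel-Roiter measure `μ^m = {1, 2, 4, ..., 2m, 2m+1}`. -/
def muUp (m : ℕ) : Set ℕ := insert (2 * m + 1) (muLow m)

/-- `μ` is a Gabriel-Roiter measure for the `n`-Kronecker quiver over `k`. -/
def IsGRMeasureFor (k : Type) [Field k] (n : ℕ) (μ : Set ℕ) : Prop :=
  ∃ M : KRep k n, FinDimRep M ∧ KIndec M ∧ IsGR M μ


/-! ### Auxiliary lemmas -/

open Module

lemma muLow_mem_iff {m x : ℕ} : x ∈ muLow m ↔ x = 1 ∨ ∃ j, 1 ≤ j ∧ j ≤ m ∧ x = 2 * j := by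
  simp [muLow, Set.mem_insert_iff, Set.mem_setOf_eq]

lemma muLow_one_mem (m : ℕ) : (1 : ℕ) ∈ muLow m := muLow_mem_iff.2 (Or.inl rfl)

lemma muLow_two_mem {m : ℕ} (hm : 1 ≤ m) : (2 : ℕ) ∈ muLow m :=
  muLow_mem_iff.2 (Or.inr ⟨1, le_rfl, hm, rfl⟩)

lemma muLow_top_mem {m : ℕ} (hm : 1 ≤ m) : 2 * m ∈ muLow m :=
  muLow_mem_iff.2 (Or.inr ⟨m, hm, le_rfl, rfl⟩)

lemma muLow_one_le {m x : ℕ} (h : x ∈ muLow m) : 1 ≤ x := by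
  rcases muLow_mem_iff.1 h with rfl | ⟨j, hj, _, rfl⟩ <;> omega

lemma muLow_le_top {m x : ℕ} (hm : 1 ≤ m) (h : x ∈ muLow m) : x ≤ 2 * m := by
  rcases muLow_mem_iff.1 h with rfl | ⟨j, hj, hjm, rfl⟩ <;> omega

lemma muLow_gap {m a b : ℕ} (hm : 1 ≤ m) (ha : a ∈ muLow m) (hb : b ∈ muLow m)
    (hab : a < b) (hno : ∀ e ∈ muLow m, ¬(a < e ∧ e < b)) : b ≤ a + 2 := by
  rcases muLow_mem_iff.1 ha with rfl | ⟨j, hj1, hjm, rfl⟩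
  · by_contra hcon
    exact hno 2 (muLow_two_mem hm) ⟨by omega, by omega⟩
  · rcases lt_or_ge j m with hlt | hge
    · by_contra hcon
      exact hno (2 * (j + 1)) (muLow_mem_iff.2 (Or.inr ⟨j + 1, by omega, by omega, rfl⟩))
        ⟨by omega, by omega⟩
    · have hjeq : j = m := le_antisymm hjm hge
      subst hjeq
      have := muLow_le_top hm hb
      omega

lemma sub_bot_or_top {V : Type} [AddCommGroup V] [Module k V] [FiniteDimensional k V]
    (h1 : finrank k V = 1) (p : Submodule k V) : p = ⊥ ∨ p = ⊤ := by
  have hle : finrank k p ≤ 1 := h1 ▸ Submodule.finrank_le p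
  have hcase : finrank k p = 0 ∨ finrank k p = 1 := by omega
  rcases hcase with h | h
  · exact Or.inl (Submodule.finrank_eq_zero.1 h)
  · exact Or.inr (Submodule.eq_top_of_finrank_eq (by rw [h, h1]))

lemma repLen_toRep {A : KRep k n} (U : KSub A) :
    repLen U.toRep = finrank k U.W1 + finrank k U.W2 := rfl

lemma sLT_repLen_lt {A : KRep k n} [FiniteDimensional k A.V1] [FiniteDimensional k A.V2]
    {U W : KSub A} (h : U.sLT W) : repLen U.toRep < repLen W.toRep := by
  obtain ⟨⟨h1, h2⟩, hne⟩ := h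
  have k1 : finrank k U.W1 ≤ finrank k W.W1 := Submodule.finrank_mono h1
  have k2 : finrank k U.W2 ≤ finrank k W.W2 := Submodule.finrank_mono h2
  rw [repLen_toRep, repLen_toRep]
  rcases hne with hne | hne
  · have := Submodule.finrank_lt_finrank_of_lt (lt_of_le_of_ne h1 hne); omega
  · have := Submodule.finrank_lt_finrank_of_lt (lt_of_le_of_ne h2 hne); omega

/-- If all arrow-images of a subrepresentation land in `S ≤ W1` and the
subrepresentation is indecomposable, then `W1 ≤ S` or `W2 = ⊥`. -/
lemma lemA {A : KRep k n} (U : KSub A) (hind : KIndec U.toRep)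
    (S : Submodule k A.V1) (hS : S ≤ U.W1)
    (hf : ∀ i, ∀ x ∈ U.W2, A.f i x ∈ S) :
    U.W1 ≤ S ∨ U.W2 = ⊥ := by
  set S₀ : Submodule k U.toRep.V1 := S.comap U.W1.subtype with hS₀
  obtain ⟨C, hC⟩ := Submodule.exists_isCompl S₀
  have hmapU' : ∀ i, ∀ x : U.W2, (A.f i).restrict (U.hmap i) x ∈ S.comap U.W1.subtype := by
    intro i x
    simp only [Submodule.mem_comap, Submodule.subtype_apply, LinearMap.restrict_apply]
    exact hf i (↑x) x.2
  have hmapU : ∀ i, ∀ x ∈ (⊤ : Submodule k U.toRep.V2), U.toRep.f i x ∈ S₀ :=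
    fun i x _ => hmapU' i x
  have hmapW : ∀ i, ∀ x ∈ (⊥ : Submodule k U.toRep.V2), U.toRep.f i x ∈ C := by
    intro i x hx
    rw [Submodule.mem_bot] at hx
    rw [hx, map_zero]
    exact C.zero_mem
  rcases hind.2 ⟨S₀, ⊤, hmapU⟩ ⟨C, ⊥, hmapW⟩ hC isCompl_top_bot with ⟨_, htb⟩ | ⟨hC0, _⟩
  · right
    have htb' : (⊤ : Submodule k U.toRep.V2) = ⊥ := htb
    apply (Submodule.eq_bot_iff _).2
    intro x hx
    have hmem : (show U.toRep.V2 from ⟨x, hx⟩) ∈ (⊤ : Submodule k U.toRep.V2) := Submodule.mem_top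
    rw [htb', Submodule.mem_bot] at hmem
    exact congrArg Subtype.val hmem
  · left
    have hC0' : C = ⊥ := hC0
    have hS₀top : S₀ = ⊤ := by
      have hcod := hC.codisjoint
      rw [hC0', codisjoint_bot] at hcod
      exact hcod
    intro x hx
    have hmem : (show U.toRep.V1 from ⟨x, hx⟩) ∈ S₀ := hS₀top ▸ Submodule.mem_top
    exact hmem

/-- An indecomposable subrepresentation with `W2 = ⊥` has `W1` of dimension at most 1. -/
lemma lemB {A : KRep k n} [FiniteDimensional k A.V1] (U : KSub A) (hind : KIndec U.toRep)
    (h2 : U.W2 = ⊥) : finrank k U.W1 ≤ 1 := by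
  by_contra hcon
  push_neg at hcon
  have hnt : Nontrivial U.W1 := by
    rw [← Module.finrank_pos_iff (R := k)]; omega
  obtain ⟨x, hx⟩ := exists_ne (0 : U.W1)
  obtain ⟨C, hC⟩ := Submodule.exists_isCompl (Submodule.span k {x})
  have hsub : Subsingleton U.toRep.V2 := by
    have hsub' : Subsingleton (↥U.W2) := by
      constructor
      intro a b
      apply Subtype.ext
      have ha : (a : A.V2) ∈ (⊥ : Submodule k A.V2) := h2 ▸ a.2
      have hb : (b : A.V2) ∈ (⊥ : Submodule k A.V2) := h2 ▸ b.2
      rw [Submodule.mem_bot] at ha hb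
      rw [ha, hb]
    exact hsub'
  have hbt : (⊥ : Submodule k U.toRep.V2) = ⊤ := by
    apply Submodule.eq_top_iff'.2
    intro x'
    rw [Submodule.mem_bot]
    exact Subsingleton.elim x' 0
  have hcc : IsCompl (⊥ : Submodule k U.toRep.V2) ⊥ := by
    constructor
    · exact disjoint_bot_left
    · rw [codisjoint_iff, sup_idem]
      exact hbt
  have hmapz : ∀ (D : Submodule k U.toRep.V1), ∀ i, ∀ y ∈ (⊥ : Submodule k U.toRep.V2),
      U.toRep.f i y ∈ D := by
    intro D i y hy
    rw [Submodule.mem_bot] at hy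
    rw [hy, map_zero]
    exact D.zero_mem
  rcases hind.2 ⟨Submodule.span k {x}, ⊥, hmapz _⟩ ⟨C, ⊥, hmapz _⟩ hC hcc with ⟨h1, _⟩ | ⟨hC0, _⟩
  · exact hx (Submodule.span_singleton_eq_bot.1 h1)
  · have hC0' : C = ⊥ := hC0
    have hsp : Submodule.span k {x} = ⊤ := by
      have hcod := hC.codisjoint
      rw [hC0', codisjoint_bot] at hcod
      exact hcod
    have hfr : finrank k (⊤ : Submodule k U.W1) = 1 := by
      rw [← hsp]; exact finrank_span_singleton hx
    rw [finrank_top] at hfr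
    omega

/-- For the `n`-Kronecker quiver with `n ≥ 3`: if `M` is indecomposable with GR
measure `μ_m = {1,2,4,...,2m}`, then every indecomposable regular factor module of
`M` contains an indecomposable subrepresentation of dimension vector `(1,1)`. -/
theorem regular_factor_muLow {k : Type} [Field k] [IsAlgClosed k] {n : ℕ} (hn : 3 ≤ n)
    (m : ℕ) (hm : 1 ≤ m) (M : KRep k n) (hfd : FinDimRep M) (hM : KIndec M)
    (hGR : IsGR M (muLow m)) :
    ∀ Y : KRep k n, RegularRep Y → (∃ φ : KHom M Y, φ.Epi) →
      ∃ U : KSub Y, KIndec U.toRep ∧ dimVec U.toRep = (1, 1) := by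
  intro Y hY hφ
  obtain ⟨φ, hepi⟩ := hφ
  haveI fd1 : FiniteDimensional k M.V1 := hfd.1
  haveI fd2 : FiniteDimensional k M.V2 := hfd.2
  haveI fdY1 : FiniteDimensional k Y.V1 := Module.Finite.of_surjective φ.g1 hepi.1
  haveI fdY2 : FiniteDimensional k Y.V2 := Module.Finite.of_surjective φ.g2 hepi.2
  by_cases hc : ∀ y : Y.V2, (∃ v' : Y.V1, ∀ i, ∃ a : k, Y.f i y = a • v') → y = 0
  · -- "Case B": no nonzero vector of rank ≤ 1; derive a contradiction.
    exfalso
    obtain ⟨⟨t, c, hch, hindec, hrange⟩, hmax⟩ := hGR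
    set ℓ : Fin (t + 1) → ℕ := fun i => repLen (c i).toRep with hℓ
    have hmono : StrictMono ℓ := fun i j hij => sLT_repLen_lt (hch i j hij)
    have hmem : ∀ i, ℓ i ∈ muLow m := by
      intro i; rw [hrange]; exact ⟨i, rfl⟩
    have hsurj : ∀ x ∈ muLow m, ∃ i, ℓ i = x := by
      intro x hx; rw [hrange] at hx; exact hx
    have hl0 : ℓ 0 = 1 := by
      obtain ⟨j0, hj0⟩ := hsurj 1 (muLow_one_mem m)
      have h1 : 1 ≤ ℓ 0 := muLow_one_le (hmem 0)
      have h2 : ℓ 0 ≤ ℓ j0 := hmono.monotone (Fin.zero_le j0)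
      omega
    have ht1 : 1 ≤ t := by
      obtain ⟨j1, hj1⟩ := hsurj 2 (muLow_two_mem hm)
      by_contra hcon
      push_neg at hcon
      have htt : t = 0 := by omega
      have hj10 : j1 = 0 := by
        apply Fin.ext
        have := j1.isLt; omega
      rw [hj10, hl0] at hj1
      omega
    have hl1 : ℓ ⟨1, by omega⟩ = 2 := by
      obtain ⟨j1, hj1⟩ := hsurj 2 (muLow_two_mem hm)
      have hj1ne : (j1 : ℕ) ≠ 0 := by
        intro h0
        have hj10 : j1 = 0 := Fin.ext h0
        rw [hj10, hl0] at hj1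
        omega
      have h2 : ℓ ⟨1, by omega⟩ ≤ ℓ j1 := by
        apply hmono.monotone
        rw [Fin.le_def]
        simp only
        omega
      have h3 : ℓ 0 < ℓ ⟨1, by omega⟩ := by
        apply hmono
        rw [Fin.lt_def]
        simp only [Fin.val_zero]
        omega
      omega
    have hgap : ∀ (j : ℕ) (h1 : j < t + 1) (h2 : j + 1 < t + 1),
        ℓ ⟨j + 1, h2⟩ ≤ ℓ ⟨j, h1⟩ + 2 := by
      intro j h1 h2
      apply muLow_gap hm (hmem _) (hmem _)
      · apply hmono
        rw [Fin.lt_def]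
        simp only
        omega
      · intro e he hbet
        obtain ⟨j', hj'⟩ := hsurj e he
        have hlt1 : (⟨j, h1⟩ : Fin (t + 1)) < j' := by
          rw [← hmono.lt_iff_lt]
          rw [hj']
          exact hbet.1
        have hlt2 : j' < (⟨j + 1, h2⟩ : Fin (t + 1)) := by
          rw [← hmono.lt_iff_lt]
          rw [hj']
          exact hbet.2
        rw [Fin.lt_def] at hlt1 hlt2
        simp only at hlt1 hlt2
        omega
    have hlast : ℓ (Fin.last t) = 2 * m := by
      obtain ⟨jm, hjm⟩ := hsurj (2 * m) (muLow_top_mem hm)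
      have h1 : ℓ jm ≤ ℓ (Fin.last t) := hmono.monotone (Fin.le_last jm)
      have h2 : ℓ (Fin.last t) ≤ 2 * m := muLow_le_top hm (hmem _)
      omega
    -- the top subrepresentation
    set topS : KSub M := ⟨⊤, ⊤, fun _ _ _ => Submodule.mem_top⟩ with htopS
    have htoprep : repLen topS.toRep = repLen M := by
      rw [repLen_toRep]
      show finrank k (⊤ : Submodule k M.V1) + finrank k (⊤ : Submodule k M.V2) = repLen M
      rw [finrank_top, finrank_top]
      rfl
    have htopindec : KIndec topS.toRep := by
      obtain ⟨hnt, hdec⟩ := hM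
      constructor
      · rcases hnt with h | h
        · haveI := h
          exact Or.inl ((Submodule.topEquiv (R := k) (M := M.V1)).toEquiv.nontrivial)
        · haveI := h
          exact Or.inr ((Submodule.topEquiv (R := k) (M := M.V2)).toEquiv.nontrivial)
      · intro U W hc1 hc2
        set e1 : topS.toRep.V1 ≃ₗ[k] M.V1 := Submodule.topEquiv with he1
        set e2 : topS.toRep.V2 ≃ₗ[k] M.V2 := Submodule.topEquiv with he2
        have hmapgen : ∀ (D : KSub topS.toRep) (i : Fin n),
            ∀ x ∈ Submodule.map (e2 : topS.toRep.V2 →ₗ[k] M.V2) D.W2,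
              M.f i x ∈ Submodule.map (e1 : topS.toRep.V1 →ₗ[k] M.V1) D.W1 := by
          intro D i x hx
          obtain ⟨u, hu, rfl⟩ := Submodule.mem_map.1 hx
          exact Submodule.mem_map.2 ⟨topS.toRep.f i u, D.hmap i u hu, rfl⟩
        have hcompl1 : IsCompl (Submodule.map (e1 : topS.toRep.V1 →ₗ[k] M.V1) U.W1) (Submodule.map (e1 : topS.toRep.V1 →ₗ[k] M.V1) W.W1) := by
          have h := (Submodule.orderIsoMapComap e1).isCompl hc1
          simpa [Submodule.orderIsoMapComap_apply] using h
        have hcompl2 : IsCompl (Submodule.map (e2 : topS.toRep.V2 →ₗ[k] M.V2) U.W2) (Submodule.map (e2 : topS.toRep.V2 →ₗ[k] M.V2) W.W2) := by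
          have h := (Submodule.orderIsoMapComap e2).isCompl hc2
          simpa [Submodule.orderIsoMapComap_apply] using h
        have hbot1 : ∀ (p : Submodule k topS.toRep.V1), Submodule.map (e1 : topS.toRep.V1 →ₗ[k] M.V1) p = ⊥ → p = ⊥ := by
          intro p hp
          apply (Submodule.orderIsoMapComap e1).injective
          rw [Submodule.orderIsoMapComap_apply, hp]
          exact ((Submodule.orderIsoMapComap e1).map_bot).symm
        have hbot2 : ∀ (p : Submodule k topS.toRep.V2), Submodule.map (e2 : topS.toRep.V2 →ₗ[k] M.V2) p = ⊥ → p = ⊥ := by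
          intro p hp
          apply (Submodule.orderIsoMapComap e2).injective
          rw [Submodule.orderIsoMapComap_apply, hp]
          exact ((Submodule.orderIsoMapComap e2).map_bot).symm
        rcases hdec ⟨Submodule.map (e1 : topS.toRep.V1 →ₗ[k] M.V1) U.W1, Submodule.map (e2 : topS.toRep.V2 →ₗ[k] M.V2) U.W2, hmapgen U⟩
          ⟨Submodule.map (e1 : topS.toRep.V1 →ₗ[k] M.V1) W.W1, Submodule.map (e2 : topS.toRep.V2 →ₗ[k] M.V2) W.W2, hmapgen W⟩ hcompl1 hcompl2 with
          ⟨ha, hb⟩ | ⟨ha, hb⟩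
        · exact Or.inl ⟨hbot1 _ ha, hbot2 _ hb⟩
        · exact Or.inr ⟨hbot1 _ ha, hbot2 _ hb⟩
    have hLge : 2 * m ≤ repLen M := by
      have e0 : finrank k (c (Fin.last t)).W1 + finrank k (c (Fin.last t)).W2 = 2 * m := by
        rw [← repLen_toRep]; exact hlast
      have h1 : finrank k (c (Fin.last t)).W1 ≤ finrank k M.V1 := Submodule.finrank_le _
      have h2 : finrank k (c (Fin.last t)).W2 ≤ finrank k M.V2 := Submodule.finrank_le _
      have h3 : repLen M = finrank k M.V1 + finrank k M.V2 := rfl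
      omega
    have hLmem : repLen M ∈ muLow m := by
      by_contra hL
      set c' : Fin (t + 2) → KSub M :=
        fun j => if h : (j : ℕ) < t + 1 then c ⟨j, h⟩ else topS with hc'
      have hev1 : ∀ (j : Fin (t + 2)) (h : (j : ℕ) < t + 1), c' j = c ⟨j, h⟩ := by
        intro j h
        simp only [hc']
        rw [dif_pos h]
      have hev2 : ∀ (j : Fin (t + 2)) (h : ¬((j : ℕ) < t + 1)), c' j = topS := by
        intro j h
        simp only [hc']
        rw [dif_neg h]
      have hch' : ∀ i j : Fin (t + 2), i < j → (c' i).sLT (c' j) := by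
        intro i j hij
        rw [Fin.lt_def] at hij
        by_cases hj : (j : ℕ) < t + 1
        · have hi : (i : ℕ) < t + 1 := by omega
          rw [hev1 i hi, hev1 j hj]
          exact hch ⟨i, hi⟩ ⟨j, hj⟩ (by rw [Fin.lt_def]; exact hij)
        · have hi : (i : ℕ) < t + 1 := by have := j.isLt; omega
          rw [hev1 i hi, hev2 j hj]
          constructor
          · exact ⟨le_top, le_top⟩
          · by_contra hcon
            push_neg at hcon
            obtain ⟨ha, hb⟩ := hcon
            have ha' : (c ⟨i, hi⟩).W1 = ⊤ := ha
            have hb' : (c ⟨i, hi⟩).W2 = ⊤ := hb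
            apply hL
            have heq : ℓ ⟨i, hi⟩ = repLen M := by
              show repLen (c ⟨i, hi⟩).toRep = repLen M
              rw [repLen_toRep, ha', hb', finrank_top, finrank_top]
              rfl
            rw [← heq]
            exact hmem ⟨i, hi⟩
      have hind' : ∀ j, KIndec (c' j).toRep := by
        intro j
        by_cases hj : (j : ℕ) < t + 1
        · rw [hev1 j hj]; exact hindec _
        · rw [hev2 j hj]; exact htopindec
      have hrange' : (Set.range fun j => repLen (c' j).toRep) = muLow m ∪ {repLen M} := by
        ext x
        simp only [Set.mem_range, Set.mem_union, Set.mem_singleton_iff]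
        constructor
        · rintro ⟨j, rfl⟩
          by_cases hj : (j : ℕ) < t + 1
          · left
            rw [hev1 j hj]
            exact hmem ⟨j, hj⟩
          · right
            rw [hev2 j hj]
            exact htoprep
        · rintro (hx | rfl)
          · obtain ⟨i, hi⟩ := hsurj x hx
            refine ⟨⟨(i : ℕ), by omega⟩, ?_⟩
            rw [hev1 ⟨(i : ℕ), by omega⟩ i.isLt]
            exact hi
          · refine ⟨Fin.last (t + 1), ?_⟩
            rw [hev2 (Fin.last (t + 1)) (by simp [Fin.last])]
            exact htoprep
      have hgrle := hmax _ ⟨t + 1, c', hch', hind', rfl⟩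
      rcases hgrle with heq | ⟨hne, hinf⟩
      · apply hL
        rw [← heq, hrange']
        exact Or.inr rfl
      · have hsd : symmDiff ((Set.range fun j => repLen (c' j).toRep)) (muLow m)
            = {repLen M} := by
          rw [hrange', symmDiff_def]
          ext x
          simp only [Set.sup_eq_union, Set.mem_union, Set.mem_diff, Set.mem_union,
            Set.mem_singleton_iff]
          constructor
          · rintro (⟨h1 | h1, h2⟩ | ⟨h1, h2⟩)
            · exact absurd h1 h2
            · exact h1
            · exact absurd (Or.inl h1) h2
          · rintro rfl
            exact Or.inl ⟨Or.inr rfl, hL⟩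
        rw [hsd, csInf_singleton] at hinf
        exact hL hinf
    have hLeq : repLen M = 2 * m := le_antisymm (muLow_le_top hm hLmem) hLge
    have htopc : (c (Fin.last t)).W1 = ⊤ ∧ (c (Fin.last t)).W2 = ⊤ := by
      have e0 : finrank k (c (Fin.last t)).W1 + finrank k (c (Fin.last t)).W2 = 2 * m := by
        rw [← repLen_toRep]; exact hlast
      have e2 : finrank k M.V1 + finrank k M.V2 = 2 * m := by
        rw [← hLeq]; rfl
      have f1 : finrank k (c (Fin.last t)).W1 ≤ finrank k M.V1 := Submodule.finrank_le _
      have f2 : finrank k (c (Fin.last t)).W2 ≤ finrank k M.V2 := Submodule.finrank_le _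
      exact ⟨Submodule.eq_top_of_finrank_eq (by omega),
        Submodule.eq_top_of_finrank_eq (by omega)⟩
    -- the key step lemma
    have step : ∀ P N : KSub M, P.W1 ≤ N.W1 → P.W2 ≤ N.W2 → KIndec N.toRep →
        repLen N.toRep ≤ repLen P.toRep + 2 → 2 ≤ repLen N.toRep →
        P.W1 ≤ LinearMap.ker φ.g1 → P.W2 ≤ LinearMap.ker φ.g2 →
        N.W1 ≤ LinearMap.ker φ.g1 ∧ N.W2 ≤ LinearMap.ker φ.g2 := by
      intro P N hPN1 hPN2 hN hgap2 hlen2 hPK1 hPK2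
      set F : Submodule k M.V1 := ⨆ i, Submodule.map (M.f i) N.W2 with hF
      have hFle : F ≤ N.W1 := by
        apply iSup_le; intro i
        rw [Submodule.map_le_iff_le_comap]
        intro x hx
        exact N.hmap i x hx
      have hSle : P.W1 ⊔ F ≤ N.W1 := sup_le hPN1 hFle
      have hfS : ∀ i, ∀ x ∈ N.W2, M.f i x ∈ P.W1 ⊔ F := by
        intro i x hx
        have hmem1 : M.f i x ∈ Submodule.map (M.f i) N.W2 := Submodule.mem_map_of_mem hx
        have hmem2 : M.f i x ∈ F := le_iSup (fun i => Submodule.map (M.f i) N.W2) i hmem1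
        exact Submodule.mem_sup_right hmem2
      rcases lemA N hN (P.W1 ⊔ F) hSle hfS with hW1S | hW2bot
      · have hfrN : finrank k N.W1 ≤ finrank k P.W1 + 1 := by
          by_contra hcon
          push_neg at hcon
          rw [repLen_toRep, repLen_toRep] at hgap2
          have h2 : finrank k N.W2 ≤ finrank k P.W2 := by omega
          have hW2eq : N.W2 = P.W2 := (Submodule.eq_of_le_of_finrank_le hPN2 h2).symm
          have hFP : F ≤ P.W1 := by
            apply iSup_le; intro i
            rw [Submodule.map_le_iff_le_comap]
            intro x hx
            rw [hW2eq] at hx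
            exact P.hmap i x hx
          have hNP : N.W1 ≤ P.W1 := hW1S.trans (sup_le le_rfl hFP)
          have := Submodule.finrank_mono hNP
          omega
        obtain ⟨w₀, hw₀⟩ : ∃ w₀ : M.V1, N.W1 ≤ P.W1 ⊔ Submodule.span k {w₀} := by
          by_cases hNP : N.W1 ≤ P.W1
          · exact ⟨0, hNP.trans le_sup_left⟩
          · obtain ⟨w₀, hw₀N, hw₀P⟩ := SetLike.not_le_iff_exists.1 hNP
            have hle : P.W1 ⊔ Submodule.span k {w₀} ≤ N.W1 :=
              sup_le hPN1 ((Submodule.span_singleton_le_iff_mem _ _).2 hw₀N)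
            have hlt : P.W1 < P.W1 ⊔ Submodule.span k {w₀} := by
              apply lt_of_le_of_ne le_sup_left
              intro hEq
              apply hw₀P
              rw [hEq]
              exact Submodule.mem_sup_right (Submodule.mem_span_singleton_self w₀)
            have hfr2 := Submodule.finrank_lt_finrank_of_lt hlt
            refine ⟨w₀, ?_⟩
            have hfr3 : finrank k N.W1
                ≤ finrank k (P.W1 ⊔ Submodule.span k {w₀} : Submodule k M.V1) := by omega
            rw [Submodule.eq_of_le_of_finrank_le hle hfr3]
        have hW2K : N.W2 ≤ LinearMap.ker φ.g2 := by
          intro z hz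
          rw [LinearMap.mem_ker]
          apply hc (φ.g2 z)
          refine ⟨φ.g1 w₀, fun i => ?_⟩
          have h1 : M.f i z ∈ P.W1 ⊔ Submodule.span k {w₀} := hw₀ (N.hmap i z hz)
          obtain ⟨u, hu, v, hv, huv⟩ := Submodule.mem_sup.1 h1
          obtain ⟨a, rfl⟩ := Submodule.mem_span_singleton.1 hv
          refine ⟨a, ?_⟩
          have hcomm := LinearMap.congr_fun (φ.comm i) z
          simp only [LinearMap.comp_apply] at hcomm
          rw [hcomm, ← huv, map_add, map_smul]
          have hu0 : φ.g1 u = 0 := hPK1 hu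
          rw [hu0, zero_add]
        refine ⟨?_, hW2K⟩
        have hFK : F ≤ LinearMap.ker φ.g1 := by
          apply iSup_le; intro i
          rw [Submodule.map_le_iff_le_comap]
          intro z hz
          rw [Submodule.mem_comap, LinearMap.mem_ker]
          have hcomm := LinearMap.congr_fun (φ.comm i) z
          simp only [LinearMap.comp_apply] at hcomm
          have hz0 : φ.g2 z = 0 := hW2K hz
          rw [← hcomm, hz0, map_zero]
        exact hW1S.trans (sup_le hPK1 hFK)
      · exfalso
        have hB := lemB N hN hW2bot
        have hrk0 : finrank k N.W2 = 0 := by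
          rw [hW2bot]
          exact finrank_bot k M.V2
        rw [repLen_toRep] at hlen2
        omega
    -- the bottom subrepresentation
    set botS : KSub M := ⟨⊥, ⊥, fun i x hx => by
      rw [Submodule.mem_bot] at hx
      rw [hx, map_zero]
      exact Submodule.zero_mem _⟩ with hbotS
    have hbotrep : repLen botS.toRep = 0 := by
      rw [repLen_toRep]
      show finrank k (⊥ : Submodule k M.V1) + finrank k (⊥ : Submodule k M.V2) = 0
      rw [finrank_bot, finrank_bot]
    -- the induction
    have inv : ∀ j : ℕ, 1 ≤ j → ∀ hj : j < t + 1,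
        (c ⟨j, hj⟩).W1 ≤ LinearMap.ker φ.g1 ∧ (c ⟨j, hj⟩).W2 ≤ LinearMap.ker φ.g2 := by
      intro j
      induction j with
      | zero => intro h; omega
      | succ jj ih =>
        intro _ hj
        by_cases hjj : jj = 0
        · subst hjj
          apply step botS (c ⟨1, hj⟩) bot_le bot_le (hindec _)
          · rw [hbotrep]
            have : repLen (c ⟨1, hj⟩).toRep = 2 := hl1
            omega
          · have : repLen (c ⟨1, hj⟩).toRep = 2 := hl1
            omega
          · exact bot_le
          · exact bot_le
        · have hjj1 : 1 ≤ jj := by omega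
          have hjlt : jj < t + 1 := by omega
          have ihh := ih hjj1 hjlt
          have hlt : (⟨jj, hjlt⟩ : Fin (t + 1)) < ⟨jj + 1, hj⟩ := by
            rw [Fin.lt_def]; simp only; omega
          obtain ⟨⟨hle1, hle2⟩, _⟩ := hch _ _ hlt
          apply step (c ⟨jj, hjlt⟩) (c ⟨jj + 1, hj⟩) hle1 hle2 (hindec _) ?_ ?_ ihh.1 ihh.2
          · exact hgap jj hjlt hj
          · have h1 : ℓ ⟨1, by omega⟩ ≤ ℓ ⟨jj + 1, hj⟩ := by
              apply hmono.monotone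
              rw [Fin.le_def]; simp only; omega
            have h2 : ℓ ⟨1, by omega⟩ = 2 := hl1
            exact le_of_eq_of_le h2.symm h1
    have hfin := inv t ht1 (by omega)
    have hlastt : (⟨t, by omega⟩ : Fin (t + 1)) = Fin.last t := rfl
    rw [hlastt] at hfin
    have hK1 : (⊤ : Submodule k M.V1) ≤ LinearMap.ker φ.g1 := htopc.1 ▸ hfin.1
    have hK2 : (⊤ : Submodule k M.V2) ≤ LinearMap.ker φ.g2 := htopc.2 ▸ hfin.2
    have hY1 : ∀ v : Y.V1, v = 0 := by
      intro v
      obtain ⟨x, rfl⟩ := hepi.1 v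
      exact LinearMap.mem_ker.1 (hK1 Submodule.mem_top)
    have hY2 : ∀ v : Y.V2, v = 0 := by
      intro v
      obtain ⟨x, rfl⟩ := hepi.2 v
      exact LinearMap.mem_ker.1 (hK2 Submodule.mem_top)
    rcases hY.1.1 with h | h
    · obtain ⟨a, b, hab⟩ := h
      exact hab (by rw [hY1 a, hY1 b])
    · obtain ⟨a, b, hab⟩ := h
      exact hab (by rw [hY2 a, hY2 b])
  · -- Case A: some nonzero vector of rank ≤ 1 exists.
    push_neg at hc
    obtain ⟨y, ⟨v', hv'⟩, hy0⟩ := hc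
    by_cases hz : ∀ i, Y.f i y = 0
    · -- all images vanish: Y is the simple injective, contradiction with regularity
      exfalso
      obtain ⟨C, hC⟩ := Submodule.exists_isCompl (Submodule.span k {y})
      have hmapU : ∀ i, ∀ x ∈ Submodule.span k {y}, Y.f i x ∈ (⊥ : Submodule k Y.V1) := by
        intro i x hx
        obtain ⟨a, rfl⟩ := Submodule.mem_span_singleton.1 hx
        rw [map_smul, hz i, smul_zero]
        exact Submodule.zero_mem _
      have hmapW : ∀ i, ∀ x ∈ C, Y.f i x ∈ (⊤ : Submodule k Y.V1) :=
        fun _ _ _ => Submodule.mem_top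
      rcases hY.1.2 ⟨⊥, Submodule.span k {y}, hmapU⟩ ⟨⊤, C, hmapW⟩ isCompl_bot_top hC with
        ⟨_, hsp⟩ | ⟨htb, _⟩
      · exact hy0 (Submodule.span_singleton_eq_bot.1 hsp)
      · have htb' : (⊤ : Submodule k Y.V1) = ⊥ := htb
        have hss : Subsingleton Y.V1 := by
          constructor
          intro a b
          have ha : a ∈ (⊤ : Submodule k Y.V1) := Submodule.mem_top
          have hb : b ∈ (⊤ : Submodule k Y.V1) := Submodule.mem_top
          rw [htb', Submodule.mem_bot] at ha hb
          rw [ha, hb]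
        have hinj : IsInjRep Y := by
          intro A B g h hg
          obtain ⟨r, hr⟩ := LinearMap.exists_leftInverse_of_injective g.g2
            (LinearMap.ker_eq_bot.2 hg.2)
          refine ⟨⟨0, h.g2.comp r, fun i => ?_⟩, ?_⟩
          · exact LinearMap.ext fun x => Subsingleton.elim _ _
          · apply KHom.ext
            · exact LinearMap.ext fun x => Subsingleton.elim _ _
            · show (h.g2.comp r).comp g.g2 = h.g2
              rw [LinearMap.comp_assoc, hr, LinearMap.comp_id]
        exact hY.2.2 ⟨0, fun _ => Y, rfl, fun i => i.elim0, hinj⟩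
    · -- some image is nonzero: build the (1,1) subrepresentation
      push_neg at hz
      obtain ⟨i0, hi0⟩ := hz
      have hv'0 : v' ≠ 0 := by
        intro h0
        obtain ⟨a, ha⟩ := hv' i0
        rw [h0, smul_zero] at ha
        exact hi0 ha
      have hmapU : ∀ i, ∀ x ∈ Submodule.span k {y}, Y.f i x ∈ Submodule.span k {v'} := by
        intro i x hx
        obtain ⟨a, rfl⟩ := Submodule.mem_span_singleton.1 hx
        obtain ⟨b, hb⟩ := hv' i
        rw [map_smul, hb]
        exact Submodule.smul_mem _ a
          (Submodule.smul_mem _ b (Submodule.mem_span_singleton_self v'))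
      refine ⟨⟨Submodule.span k {v'}, Submodule.span k {y}, hmapU⟩, ⟨?_, ?_⟩, ?_⟩
      · left
        exact nontrivial_of_ne (⟨v', Submodule.mem_span_singleton_self v'⟩ :
          Submodule.span k {v'}) 0 (by intro hq; exact hv'0 (congrArg Subtype.val hq))
      · intro A B hc1 hc2
        have hr1 : finrank k (Submodule.span k {v'}) = 1 := finrank_span_singleton hv'0
        have hr2 : finrank k (Submodule.span k {y}) = 1 := finrank_span_singleton hy0
        have hkey : ∀ D : KSub (KSub.toRep (⟨Submodule.span k {v'}, Submodule.span k {y},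
            hmapU⟩ : KSub Y)), D.W2 = ⊤ → D.W1 ≠ ⊥ := by
          intro D h2 h1
          have hy' : (show (KSub.toRep (⟨Submodule.span k {v'}, Submodule.span k {y},
              hmapU⟩ : KSub Y)).V2 from ⟨y, Submodule.mem_span_singleton_self y⟩) ∈ D.W2 := by
            rw [h2]; exact Submodule.mem_top
          have hmem := D.hmap i0 _ hy'
          rw [h1, Submodule.mem_bot] at hmem
          apply hi0
          exact congrArg Subtype.val hmem
        rcases sub_bot_or_top (V := ↥(Submodule.span k {y})) hr2 A.W2 with h | h
        · have hB2 : B.W2 = ⊤ := by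
            have hcod := hc2.codisjoint
            rw [h] at hcod
            exact bot_codisjoint.1 hcod
          have hB1 : B.W1 = ⊤ :=
            ((sub_bot_or_top (V := ↥(Submodule.span k {v'})) hr1 B.W1).resolve_left
              (hkey B hB2))
          have hA1 : A.W1 = ⊥ := by
            have hd := hc1.disjoint
            rw [hB1] at hd
            exact disjoint_top.1 hd
          exact Or.inl ⟨hA1, h⟩
        · have hA1 : A.W1 = ⊤ :=
            ((sub_bot_or_top (V := ↥(Submodule.span k {v'})) hr1 A.W1).resolve_left
              (hkey A h))
          have hB1 : B.W1 = ⊥ := by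
            have hd := hc1.disjoint
            rw [hA1] at hd
            exact disjoint_top.1 hd.symm
          have hB2 : B.W2 = ⊥ := by
            have hd := hc2.disjoint
            rw [h] at hd
            exact disjoint_top.1 hd.symm
          exact Or.inr ⟨hB1, hB2⟩
      · show (finrank k (Submodule.span k {v'}), finrank k (Submodule.span k {y})) = (1, 1)
        rw [finrank_span_singleton hv'0, finrank_span_singleton hy0]
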